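/- Let r = 2s−1 be odd and G = C_{n₁} ⊕ ⋯ ⊕ C_{n_r} with 2 ≤ n_r ∣ ⋯ ∣ n₁, and let g₁,…,g_{r+1} be the zigzag elements (g₁ = e₁, g_{2i} = eᵢ + fᵢ, g_{2i+1} = fᵢ + e_{i+1}, g_{r+1} = e_s). Then for any m = [m₁,…,m_{r+1}] ∈ B(g₁,…,g_{r+1}), the chain of congruences m₁ ≡ −m₂ ≡ m₃ ≡ −m₄ ≡ ⋯ ≡ m_r ≡ −m_{r+1} (mod n_r) holds. -/

import Mathlib

open Finset

/-- Membership in the block monoid `B(g₁,…,g_k)`. -/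
def IsBlock {G : Type*} [AddCommGroup G] {k : ℕ} (g : Fin k → G)
    (m : Fin k → ℕ) : Prop :=
  ∑ i, (m i) • g i = 0

/-- The length `|m| = ∑ᵢ mᵢ`. -/
def blockLen {k : ℕ} (m : Fin k → ℕ) : ℕ := ∑ i, m i

/-- `m` is an atom of the block monoid: nonzero, and not the sum of two
nonzero elements of the monoid. -/
def IsBlockAtom {G : Type*} [AddCommGroup G] {k : ℕ} (g : Fin k → G)
    (m : Fin k → ℕ) : Prop :=
  IsBlock g m ∧ m ≠ 0 ∧
    ∀ a b : Fin k → ℕ, IsBlock g a → IsBlock g b → m = a + b → a = 0 ∨ b = 0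

/-- `m` is a group atom: it belongs to the block monoid and cannot be
written as an integral linear combination of elements of the block monoid
of length strictly smaller than `|m|`. -/
def IsGroupAtom {G : Type*} [AddCommGroup G] {k : ℕ} (g : Fin k → G)
    (m : Fin k → ℕ) : Prop :=
  IsBlock g m ∧
    ¬ ∃ (T : Finset (Fin k → ℕ)) (c : (Fin k → ℕ) → ℤ),
        (∀ b ∈ T, IsBlock g b ∧ blockLen b < blockLen m) ∧
        (∀ i, (m i : ℤ) = ∑ b ∈ T, c b * (b i))

/-- The zigzag elements `g₁,…,g_{r+1}` (0-indexed) in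
`G = C_{n₁} ⊕ ⋯ ⊕ C_{n_{2s-1}}`: `g₁ = e₁`, `g_{2i} = eᵢ + fᵢ`,
`g_{2i+1} = fᵢ + e_{i+1}` for `i = 1,…,s-1`, and `g_{2s} = e_s`.
Coordinates `0,…,s-1` correspond to `e₁,…,e_s` and coordinates
`s,…,2s-2` to `f₁,…,f_{s-1}`. -/
def zigzagOdd (s : ℕ) (n : Fin (2*s-1) → ℕ) :
    Fin (2*s) → ∀ c : Fin (2*s-1), ZMod (n c) :=
  fun t => fun c =>
    if c.val = t.val / 2 then 1
    else if 1 ≤ t.val ∧ t.val ≤ 2*s-2 ∧ c.val = s + (t.val - 1)/2 then 1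
    else 0

theorem dvd_add_of_sum_smul_eq_zero {k N : ℕ} {m : Fin k → ℕ} {x : Fin k → ZMod N}
    {a b : Fin k} (hab : a ≠ b) (hx : ∀ u, x u = if u = a ∨ u = b then 1 else 0)
    (hsum : ∑ u, m u • x u = 0) : N ∣ m a + m b := by
  rw [Fintype.sum_eq_add a b hab fun u hu => by simp [hx u, hu.1, hu.2]] at hsum
  simpa [hx, hab, hab.symm, ← ZMod.natCast_eq_zero_iff] using hsum

theorem zigzagOdd_apply_eq_ite {s : ℕ} (n : Fin (2*s-1) → ℕ) {t : ℕ} (ht : t + 1 < 2*s) :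
    ∃ c : Fin (2*s-1), ∀ u : Fin (2*s),
      zigzagOdd s n u c = if u.val = t ∨ u.val = t + 1 then 1 else 0 := by
  -- `t = 2i` is detected by the coordinate `e_{i+1}`, `t = 2i + 1` by `f_{i+1}`.
  obtain ⟨i, rfl | rfl⟩ := Nat.even_or_odd' t
  · refine ⟨⟨i, by omega⟩, fun u => ?_⟩
    have := u.isLt
    simp only [zigzagOdd]
    split_ifs <;> first | rfl | omega
  · refine ⟨⟨s + i, by omega⟩, fun u => ?_⟩
    have := u.isLt
    simp only [zigzagOdd]
    split_ifs <;> first | rfl | omega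

theorem neg_one_pow_succ_mul_modEq {N x y : ℤ} (t : ℕ) (h : N ∣ x + y) :
    (-1) ^ (t + 1) * y ≡ (-1) ^ t * x [ZMOD N] := by
  obtain ⟨c, hc⟩ := h
  exact Int.modEq_iff_dvd.mpr ⟨(-1) ^ t * c, by linear_combination (-1) ^ t * hc⟩

theorem neg_one_pow_mul_modEq_of_dvd_add {N : ℤ} {k : ℕ} {f : Fin k → ℤ}
    (h : ∀ t (ht : t + 1 < k), N ∣ f ⟨t, by omega⟩ + f ⟨t + 1, ht⟩) (t u : Fin k) :
    (-1) ^ t.val * f t ≡ (-1) ^ u.val * f u [ZMOD N] := by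
  have to_zero : ∀ t (ht : t < k), (-1) ^ t * f ⟨t, ht⟩ ≡ f ⟨0, by omega⟩ [ZMOD N] := by
    intro t
    induction t with
    | zero => intro; simp
    | succ t ih => exact fun ht => (neg_one_pow_succ_mul_modEq t (h t ht)).trans (ih _)
  exact (to_zero t t.isLt).trans (to_zero u u.isLt).symm

theorem IsBlock.zigzagOdd_dvd_add {s : ℕ} (hs : 1 ≤ s) {n : Fin (2*s-1) → ℕ}
    (hdvd : ∀ i j : Fin (2*s-1), i ≤ j → n j ∣ n i) {m : Fin (2*s) → ℕ}
    (hm : IsBlock (zigzagOdd s n) m) {t : ℕ} (ht : t + 1 < 2*s) :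
    n ⟨2*s-2, by omega⟩ ∣ m ⟨t, by omega⟩ + m ⟨t + 1, ht⟩ := by
  obtain ⟨c, hc⟩ := zigzagOdd_apply_eq_ite n ht
  have hsum : ∑ u, m u • zigzagOdd s n u c = 0 := by simpa using congrFun hm c
  refine (hdvd c _ (Fin.le_def.mpr (by simp only; omega))).trans
    (dvd_add_of_sum_smul_eq_zero (by simp [Fin.ext_iff]) (fun u => ?_) hsum)
  simp [hc u, Fin.ext_iff]

theorem zigzagOdd_chain_congruence (s : ℕ) (hs : 1 ≤ s)
    (n : Fin (2*s-1) → ℕ)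
    (hdvd : ∀ i j : Fin (2*s-1), i ≤ j → n j ∣ n i)
    (m : Fin (2*s) → ℕ) (hm : IsBlock (zigzagOdd s n) m) :
    ∀ t u : Fin (2*s),
      ((-1 : ℤ) ^ t.val * (m t : ℤ)) ≡ ((-1 : ℤ) ^ u.val * (m u : ℤ))
        [ZMOD (n ⟨2*s-2, by omega⟩ : ℤ)] :=
  neg_one_pow_mul_modEq_of_dvd_add fun _ ht => by exact_mod_cast hm.zigzagOdd_dvd_add hs hdvd ht
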